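/- In the canonical chain partition C_1, …, C_w of a 2-dimensional poset P with realizer [L_1, L_2], for each 1 ≤ i < j ≤ w and each y ∈ C_j there exists x ∈ C_i incomparable to y in P with x before y in L_1. In particular C_1 is a maximal chain of P. -/

import Mathlib

open Finset

/-- The canonical antichain partition (0-indexed) of the subposet induced on `S`,
with respect to a strict relation `lt`. -/
noncomputable def canonAntichain {α : Type*} [DecidableEq α] (lt : α → α → Prop) (S : Finset α) :
    ℕ → Finset α
  | j =>
    let R := S \ (Finset.range j).attach.biUnion (fun i => canonAntichain lt S i.1)
    @Finset.filter α (fun x => ∀ y ∈ R, ¬ lt y x) (fun _ => Classical.dec _) R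
  decreasing_by exact Finset.mem_range.mp i.2


/-!
An element `y` of a later layer `C j` was not `Q`-minimal in what remained at stage `i < j`, so
something remaining lies below it in `Q`; a `Q`-minimal such element is `Q`-minimal outright and
hence lies in `C i`. Since distinct elements are `Q`-comparable exactly when they are
`P`-incomparable, every layer (a `Q`-antichain) is a `P`-chain, the element found below `y` is
`P`-incomparable to `y` and precedes it in `L₁`, and no element outside `C 0` is
`P`-comparable to all of `C 0`.
-/

theorem Finset.Nonempty.exists_forall_not_rel {α : Type*} (lt : α → α → Prop)
    [IsStrictOrder α lt] {T : Finset α} (hT : T.Nonempty) : ∃ x ∈ T, ∀ z ∈ T, ¬ lt z x := by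
  obtain ⟨x, hx, hmin⟩ := (Set.wellFoundedOn_iff.1
    (T.finite_toSet.wellFoundedOn (r := lt))).has_min (T : Set α) hT
  exact ⟨x, hx, fun z hz hzx => hmin z hz ⟨hzx, hz, hx⟩⟩

section CanonicalAntichainPartition

variable {α : Type*} [DecidableEq α] {lt : α → α → Prop} {S : Finset α} {i j : ℕ} {x y : α}

noncomputable def canonResidual (lt : α → α → Prop) (S : Finset α) (j : ℕ) : Finset α :=
  S \ (Finset.range j).attach.biUnion (fun i => canonAntichain lt S i.1)

theorem mem_canonAntichain :
    x ∈ canonAntichain lt S j ↔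
      x ∈ canonResidual lt S j ∧ ∀ z ∈ canonResidual lt S j, ¬ lt z x := by
  rw [canonAntichain]
  exact @mem_filter _ _ (fun _ => Classical.dec _) _ _

theorem mem_canonResidual :
    x ∈ canonResidual lt S j ↔ x ∈ S ∧ ∀ i < j, x ∉ canonAntichain lt S i := by
  simp [canonResidual]

theorem canonResidual_anti (hij : i ≤ j) : canonResidual lt S j ⊆ canonResidual lt S i := by
  intro x hx
  rw [mem_canonResidual] at hx ⊢
  exact ⟨hx.1, fun k hk => hx.2 k (hk.trans_le hij)⟩

theorem isAntichain_canonAntichain : IsAntichain lt (canonAntichain lt S j : Set α) := by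
  intro x hx y hy _ hxy
  exact (mem_canonAntichain.1 hy).2 x (mem_canonAntichain.1 hx).1 hxy

variable [IsStrictOrder α lt]

theorem exists_mem_canonAntichain_lt (hy : y ∈ canonResidual lt S i)
    (hyC : y ∉ canonAntichain lt S i) : ∃ x ∈ canonAntichain lt S i, lt x y := by
  classical
  have hbelow : ((canonResidual lt S i).filter (lt · y)).Nonempty := by
    by_contra hempty
    refine hyC (mem_canonAntichain.2 ⟨hy, fun z hz hzy => hempty ⟨z, ?_⟩⟩)
    exact mem_filter.2 ⟨hz, hzy⟩
  -- a minimal element among those below `y` is minimal in the whole residual, by transitivity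
  obtain ⟨x, hx, hmin⟩ := hbelow.exists_forall_not_rel lt
  rw [mem_filter] at hx
  refine ⟨x, mem_canonAntichain.2 ⟨hx.1, fun z hz hzx => ?_⟩, hx.2⟩
  exact hmin z (mem_filter.2 ⟨hz, _root_.trans hzx hx.2⟩) hzx

theorem exists_mem_canonAntichain_zero_lt (hy : y ∈ S) (hy₀ : y ∉ canonAntichain lt S 0) :
    ∃ x ∈ canonAntichain lt S 0, lt x y :=
  exists_mem_canonAntichain_lt (mem_canonResidual.2 ⟨hy, fun _ h => absurd h (Nat.not_lt_zero _)⟩)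
    hy₀

theorem exists_mem_canonAntichain_lt_of_lt (hij : i < j) (hy : y ∈ canonAntichain lt S j) :
    ∃ x ∈ canonAntichain lt S i, lt x y := by
  have hyj := (mem_canonAntichain.1 hy).1
  exact exists_mem_canonAntichain_lt (canonResidual_anti hij.le hyj)
    ((mem_canonResidual.1 hyj).2 i hij)

end CanonicalAntichainPartition

section Conjugate

variable {X : Type*} {r₁ r₂ : X → X → Prop}

/-- The strict order of the primary conjugate `L₁ ∩ reverse L₂`. -/
def conjLT (r₁ r₂ : X → X → Prop) (a b : X) : Prop := (r₁ a b ∧ r₂ b a) ∧ a ≠ b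

instance conjLT.isStrictOrder [IsTrans X r₁] [Std.Antisymm r₁] [IsTrans X r₂] :
    IsStrictOrder X (conjLT r₁ r₂) where
  irrefl _ h := h.2 rfl
  trans a b c hab hbc := by
    refine ⟨⟨_root_.trans hab.1.1 hbc.1.1, _root_.trans hbc.1.2 hab.1.2⟩, ?_⟩
    rintro rfl
    exact hab.2 (antisymm hab.1.1 hbc.1.1)

variable [PartialOrder X]

theorem incomp_of_conjLT [Std.Antisymm r₁] [Std.Antisymm r₂]
    (hreal : ∀ a b : X, a ≤ b ↔ (r₁ a b ∧ r₂ a b)) {a b : X} (h : conjLT r₁ r₂ a b) :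
    ¬ a ≤ b ∧ ¬ b ≤ a :=
  ⟨fun hab => h.2 (antisymm ((hreal a b).1 hab).2 h.1.2),
    fun hba => h.2 (antisymm h.1.1 ((hreal b a).1 hba).1)⟩

theorem IsAntichain.isChain_of_conjLT [Std.Total r₁] [Std.Total r₂]
    (hreal : ∀ a b : X, a ≤ b ↔ (r₁ a b ∧ r₂ a b)) {s : Set X}
    (hs : IsAntichain (conjLT r₁ r₂) s) : IsChain (· ≤ ·) s := by
  intro a ha b hb hne
  rcases total_of r₁ a b with h₁ | h₁ <;> rcases total_of r₂ a b with h₂ | h₂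
  · exact .inl ((hreal a b).2 ⟨h₁, h₂⟩)
  · exact absurd ⟨⟨h₁, h₂⟩, hne⟩ (hs ha hb hne)
  · exact absurd ⟨⟨h₁, h₂⟩, hne.symm⟩ (hs hb ha hne.symm)
  · exact .inr ((hreal b a).2 ⟨h₁, h₂⟩)

end Conjugate

/-- The canonical chain partition `C_0, C_1, …` of a 2-dimensional poset `P` with
realizer `[L₁, L₂]` is the canonical antichain partition of the primary conjugate
`Q = L₁ ∩ reverse L₂` (obtained by recursively removing the minimal elements of `Q`),
its members being chains of `P`.  For all `i < j`, every `y ∈ C_j` admits some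
`x ∈ C_i` incomparable to `y` in `P` with `x` before `y` in `L₁`; in particular,
`C_0` is a maximal chain of `P`. -/
theorem canonical_chain_partition_property {X : Type*} [Fintype X] [DecidableEq X]
    [PartialOrder X]
    (r₁ r₂ : X → X → Prop) (h₁ : IsLinearOrder X r₁) (h₂ : IsLinearOrder X r₂)
    (hreal : ∀ a b : X, a ≤ b ↔ (r₁ a b ∧ r₂ a b)) :
    let qlt : X → X → Prop := fun a b => (r₁ a b ∧ r₂ b a) ∧ a ≠ b
    let C : ℕ → Finset X := canonAntichain qlt Finset.univ
    (∀ i, IsChain (· ≤ ·) (C i : Set X)) ∧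
    (∀ i j : ℕ, i < j → ∀ y ∈ C j, ∃ x ∈ C i,
      (¬ x ≤ y ∧ ¬ y ≤ x) ∧ r₁ x y ∧ x ≠ y) ∧
    (∀ S : Finset X, IsChain (· ≤ ·) (S : Set X) → C 0 ⊆ S → S = C 0) := by
  intro qlt C
  have : IsStrictOrder X qlt := conjLT.isStrictOrder
  refine ⟨fun i => isAntichain_canonAntichain.isChain_of_conjLT hreal,
    fun i j hij y hy => ?_, fun S hS hsub => hsub.antisymm' fun y hy => ?_⟩
  · obtain ⟨x, hx, hxy⟩ := exists_mem_canonAntichain_lt_of_lt hij hy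
    exact ⟨x, hx, incomp_of_conjLT hreal hxy, hxy.1.1, hxy.2⟩
  · by_contra hy₀
    obtain ⟨x, hx, hxy⟩ := exists_mem_canonAntichain_zero_lt (mem_univ y) hy₀
    have hincomp := incomp_of_conjLT hreal hxy
    exact (hS (hsub hx) hy hxy.2).elim hincomp.1 hincomp.2
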